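/- arXiv:1004.4398 — 5 statements merged into one kernel-verified Lean document; each statement's English description precedes it below -/
import Mathlib

section
/- Let A be an m×n real matrix with m < n, and let B = A·X for some X ∈ ℝ^{n×r} with ‖X‖₀ = |supp X| = k (supp X is the set of nonzero rows of X). If ‖X‖₀ < (spark(A) + rank(B) - 1)/2, then X is the unique solution of the minimization of ‖Z‖₀ subject to A·Z = B. -/
open Matrix

/-- Set of indices of nonzero rows of `X`. -/
noncomputable def rowSupp {n r : ℕ} (X : Matrix (Fin n) (Fin r) ℝ) : Finset (Fin n) :=
  @Finset.filter _ (fun i => X i ≠ 0) (Classical.decPred _) Finset.univ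

/-- The spark of `A`: smallest number of linearly dependent columns of `A`. -/
noncomputable def spark {m n : ℕ} (A : Matrix (Fin m) (Fin n) ℝ) : ℕ :=
  sInf {s | ∃ S : Finset (Fin n), S.card = s ∧
    ¬ LinearIndependent ℝ (fun j : {j // j ∈ S} => (fun i => A i j.1))}

/-!
If `Z ≠ X` is another solution with at most `k` nonzero rows, then `W = X - Z` is nonzero with
`A W = 0`. The column space of `W` has dimension `rank W` and consists of vectors supported on
`supp W`, so it contains a nonzero vector vanishing on any `rank W - 1` indices of `supp W`; that
vector lies in `ker A`, whence `spark A ≤ |supp W| - rank W + 1`. Off `supp Z` the rows of `X` are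
those of `W`, so `rank B ≤ rank X ≤ rank W + |supp X ∩ supp Z|`. Adding the two bounds,
`spark A + rank B ≤ |supp W| + |supp X ∩ supp Z| + 1 ≤ |supp X| + |supp Z| + 1 ≤ 2k + 1`.
-/

theorem mem_rowSupp {n r : ℕ} {X : Matrix (Fin n) (Fin r) ℝ} {i : Fin n} :
    i ∈ rowSupp X ↔ X i ≠ 0 := by
  simp [rowSupp]

theorem rank_le_card_rowSupp {n r : ℕ} (X : Matrix (Fin n) (Fin r) ℝ) :
    X.rank ≤ (rowSupp X).card :=
  X.rank_le_card_of_support_subset _ fun _ hi => mem_rowSupp.mpr hi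

theorem rowSupp_sub_subset {n r : ℕ} (X Z : Matrix (Fin n) (Fin r) ℝ) :
    rowSupp (X - Z) ⊆ rowSupp X ∪ rowSupp Z := by
  intro i hi
  rw [Finset.mem_union, mem_rowSupp, mem_rowSupp]
  by_contra! h
  exact mem_rowSupp.mp hi (by change X i - Z i = 0; rw [h.1, h.2, sub_zero])

theorem card_rowSupp_sub_add_card_inter_le {n r : ℕ} (X Z : Matrix (Fin n) (Fin r) ℝ) :
    (rowSupp (X - Z)).card + (rowSupp X ∩ rowSupp Z).card ≤
      (rowSupp X).card + (rowSupp Z).card := by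
  rw [← Finset.card_union_add_card_inter (rowSupp X)]
  exact Nat.add_le_add_right (Finset.card_le_card (rowSupp_sub_subset X Z)) _

theorem Matrix.rank_add_le {m n : Type*} [Fintype n] {K : Type*} [Field K]
    (M N : Matrix m n K) : (M + N).rank ≤ M.rank + N.rank := by
  rw [Matrix.rank, mulVecLin_add]
  exact (Submodule.finrank_mono (LinearMap.range_add_le _ _)).trans
    (Submodule.finrank_add_le_finrank_add_finrank _ _)

theorem Matrix.rank_pos_of_ne_zero {m n : Type*} [Fintype n] [DecidableEq n] {K : Type*}
    [Field K] {M : Matrix m n K} (hM : M ≠ 0) : 0 < M.rank := by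
  rw [Nat.pos_iff_ne_zero, Matrix.rank, Ne, Submodule.finrank_eq_zero, LinearMap.range_eq_bot,
    ← Matrix.toLin'_apply', map_eq_zero_iff _ Matrix.toLin'.injective]
  exact hM

theorem Submodule.exists_ne_zero_forall_eq_zero_of_card_lt {ι K : Type*} [Fintype ι] [Field K]
    (V : Submodule K (ι → K)) (R : Finset ι) (hR : R.card < Module.finrank K V) :
    ∃ v ∈ V, v ≠ 0 ∧ ∀ i ∈ R, v i = 0 := by
  let restrict : V →ₗ[K] (R → K) := LinearMap.pi fun i => (LinearMap.proj i.1).comp V.subtype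
  obtain ⟨v, hv, hv0⟩ := (Submodule.ne_bot_iff _).mp
    (restrict.ker_ne_bot_of_finrank_lt
      (by rwa [Module.finrank_fintype_fun_eq_card, Fintype.card_coe]))
  exact ⟨v, v.2, by simpa using hv0, fun i hi => congrFun hv ⟨i, hi⟩⟩

theorem spark_le_card_of_mulVec_eq_zero {m n : ℕ} (A : Matrix (Fin m) (Fin n) ℝ)
    {v : Fin n → ℝ} (hv : v ≠ 0) (hAv : A *ᵥ v = 0) {S : Finset (Fin n)} (hS : ∀ j, v j ≠ 0 → j ∈ S) :
    spark A ≤ S.card := by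
  refine Nat.sInf_le ⟨S, rfl, Fintype.not_linearIndependent_iff.mpr ?_⟩
  obtain ⟨j, hj⟩ := Function.ne_iff.mp hv
  refine ⟨fun j => v j, ?_, ⟨j, hS j hj⟩, hj⟩
  ext i
  calc (∑ j : S, v j • fun i => A i j) i = ∑ j ∈ S, v j * A i j := by
        simp only [Finset.sum_apply, Pi.smul_apply, smul_eq_mul]
        exact Finset.sum_coe_sort S fun j => v j * A i j
    _ = ∑ j, v j * A i j := Finset.sum_subset (Finset.subset_univ S) fun j _ hjS => by
        rw [not_not.mp (mt (hS j) hjS), zero_mul]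
    _ = 0 := by simpa [mulVec, dotProduct, mul_comm] using congrFun hAv i

theorem apply_eq_zero_of_mem_range_mulVecLin {n r : ℕ} {W : Matrix (Fin n) (Fin r) ℝ}
    {v : Fin n → ℝ} (hv : v ∈ LinearMap.range W.mulVecLin) {i : Fin n} (hi : W i = 0) :
    v i = 0 := by
  obtain ⟨u, rfl⟩ := hv
  simp [mulVec, hi]

theorem spark_add_rank_le_of_mul_eq_zero {m n r : ℕ} (A : Matrix (Fin m) (Fin n) ℝ)
    {W : Matrix (Fin n) (Fin r) ℝ} (hW : W ≠ 0) (hAW : A * W = 0) :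
    spark A + W.rank ≤ (rowSupp W).card + 1 := by
  classical
  have hrank_pos := rank_pos_of_ne_zero hW
  have hrank_le := rank_le_card_rowSupp W
  obtain ⟨R, hRW, hRcard⟩ :=
    Finset.exists_subset_card_eq (show W.rank - 1 ≤ (rowSupp W).card by omega)
  obtain ⟨v, hvW, hv0, hvR⟩ :=
    (LinearMap.range W.mulVecLin).exists_ne_zero_forall_eq_zero_of_card_lt R
      (show R.card < W.rank by omega)
  have hAv : A *ᵥ v = 0 := by
    obtain ⟨u, rfl⟩ := hvW
    rw [mulVecLin_apply, mulVec_mulVec, hAW, zero_mulVec]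
  have hspark := spark_le_card_of_mulVec_eq_zero A hv0 hAv (S := rowSupp W \ R) fun j hj =>
    Finset.mem_sdiff.mpr
      ⟨mem_rowSupp.mpr fun hWj => hj (apply_eq_zero_of_mem_range_mulVecLin hvW hWj),
        fun hjR => hj (hvR j hjR)⟩
  rw [Finset.card_sdiff_of_subset hRW] at hspark
  omega

theorem rank_le_rank_sub_add_card_inter {n r : ℕ} (X Z : Matrix (Fin n) (Fin r) ℝ) :
    X.rank ≤ (X - Z).rank + (rowSupp X ∩ rowSupp Z).card := by
  classical
  set D : Matrix (Fin n) (Fin n) ℝ := diagonal fun i => if i ∈ rowSupp Z then 0 else 1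
  have hrow : ∀ i, (X - D * (X - Z)) i = if i ∈ rowSupp Z then X i else 0 := by
    intro i
    ext j
    by_cases hi : i ∈ rowSupp Z
    · simp [D, diagonal_mul, hi]
    · simp [D, diagonal_mul, hi, congrFun (not_not.mp (mt mem_rowSupp.mpr hi)) j]
  have hsupp : Function.support (X - D * (X - Z)).row ⊆ ↑(rowSupp X ∩ rowSupp Z) := by
    intro i hi
    rw [Function.mem_support, row, hrow] at hi
    split_ifs at hi with hiZ
    · exact Finset.mem_inter.mpr ⟨mem_rowSupp.mpr hi, hiZ⟩
    · exact absurd rfl hi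
  calc X.rank = (D * (X - Z) + (X - D * (X - Z))).rank := by rw [add_sub_cancel]
    _ ≤ (D * (X - Z)).rank + (X - D * (X - Z)).rank := rank_add_le _ _
    _ ≤ (X - Z).rank + (rowSupp X ∩ rowSupp Z).card :=
        add_le_add (rank_mul_le_right _ _) (rank_le_card_of_support_subset _ _ hsupp)

theorem stmt0_general {m n r k : ℕ}
    (A : Matrix (Fin m) (Fin n) ℝ) (X : Matrix (Fin n) (Fin r) ℝ)
    (B : Matrix (Fin m) (Fin r) ℝ) (hB : B = A * X)
    (hk : (rowSupp X).card = k)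
    (hbound : (k : ℝ) < ((spark A : ℝ) + (B.rank : ℝ) - 1) / 2) :
    ∀ Z : Matrix (Fin n) (Fin r) ℝ, A * Z = B → (rowSupp Z).card ≤ k → Z = X := by
  intro Z hZ hZk
  by_contra hZX
  have hAW : A * (X - Z) = 0 := by rw [Matrix.mul_sub, hZ, hB, sub_self]
  have hspark := spark_add_rank_le_of_mul_eq_zero A (sub_ne_zero.mpr (Ne.symm hZX)) hAW
  have hrankB : B.rank ≤ X.rank := hB ▸ rank_mul_le_right A X
  have hrankX := rank_le_rank_sub_add_card_inter X Z
  have hcard := card_rowSupp_sub_add_card_inter_le X Z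
  have hbound' : 2 * k + 1 < spark A + B.rank := by
    have : ((2 * k + 1 : ℕ) : ℝ) < spark A + B.rank := by push_cast; linarith
    exact_mod_cast this
  omega

theorem stmt0 {m n r k : ℕ} (hmn : m < n)
    (A : Matrix (Fin m) (Fin n) ℝ) (X : Matrix (Fin n) (Fin r) ℝ)
    (B : Matrix (Fin m) (Fin r) ℝ) (hB : B = A * X)
    (hk : (rowSupp X).card = k)
    (hbound : (k : ℝ) < ((spark A : ℝ) + (B.rank : ℝ) - 1) / 2) :
    ∀ Z : Matrix (Fin n) (Fin r) ℝ, A * Z = B → (rowSupp Z).card ≤ k → Z = X :=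
  stmt0_general A X B hB hk hbound
end

section
/- Under the canonical MMV assumptions with I ⊂ supp X, |I| = k - r, and rank(Qᵀ·A_I) = k - r, for any j ∉ I the condition rank(Qᵀ·[A_I, a_j]) = k - r is equivalent to a_jᵀ·[P_{R(Q)} − P_{R(P_{R(Q)}·A_I)}]·a_j = 0, where P_W denotes the orthogonal projection onto a subspace W and R(M) the column space of M. -/
/-!
Write `M = QᵀA_I`, `v = Qᵀa_j` and `P = M (MᵀM)⁻¹ Mᵀ`; the rank hypothesis makes the Gram matrix
`MᵀM` invertible, so `P` is the orthogonal projection onto `R(M)`. Appending the column `v` to `M`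
keeps the rank iff `v ∈ R(M)`. On the other side, the quadratic form equals
`vᵀ(1 - P)v = ‖(1 - P)v‖²`, because `1 - P` is a symmetric idempotent, and this vanishes iff
`v = Pv`, i.e. iff `v ∈ R(M)`.
-/

open Matrix

namespace Matrix

section Rank

variable {K : Type*} [Field K] {m n : Type*}

theorem isUnit_of_rank_eq_card [Fintype m] [DecidableEq m] (A : Matrix m m K)
    (h : A.rank = Fintype.card m) : IsUnit A :=
  linearIndependent_cols_iff_isUnit.mp <| linearIndependent_iff_card_eq_finrank_span.mpr <| by
    rw [Set.finrank, ← rank_eq_finrank_span_cols, h]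

theorem rank_fromCols_replicateCol_eq_rank_iff [Finite m] [Fintype n] (M : Matrix m n K)
    (v : m → K) :
    (fromCols M (replicateCol Unit v)).rank = M.rank ↔
      v ∈ Submodule.span K (Set.range M.col) := by
  have hcols : Set.range (fromCols M (replicateCol Unit v)).col = insert v (Set.range M.col) := by
    rw [col, transpose_fromCols]
    change Set.range (Sum.elim M.col fun _ : Unit => v) = _
    rw [Set.Sum.elim_range, Set.range_const, Set.union_comm, Set.insert_eq]
  rw [rank_eq_finrank_span_cols, rank_eq_finrank_span_cols, hcols, Submodule.span_insert,
    ← Submodule.span_singleton_le_iff_mem]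
  constructor
  · intro h
    exact le_sup_left.trans (Submodule.eq_of_le_of_finrank_eq le_sup_right h.symm).ge
  · intro hv
    rw [sup_eq_right.mpr hv]

end Rank

section ColProj

variable {m n : Type*} [Fintype m] [Fintype n] [DecidableEq n]

/-- The paper's `P_{R(M)}` when `MᵀM` is invertible; otherwise `(MᵀM)⁻¹ = 0` and so is this. -/
noncomputable def colProj {R : Type*} [CommRing R] (M : Matrix m n R) : Matrix m m R :=
  M * (Mᵀ * M)⁻¹ * Mᵀ

section CommRing

variable {R : Type*} [CommRing R] {M : Matrix m n R}

theorem colProj_mul (hG : IsUnit (Mᵀ * M).det) : colProj M * M = M := by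
  simp only [colProj, Matrix.mul_assoc, nonsing_inv_mul _ hG, Matrix.mul_one]

theorem isIdempotentElem_colProj (hG : IsUnit (Mᵀ * M).det) : IsIdempotentElem (colProj M) := by
  calc colProj M * colProj M = colProj M * M * (Mᵀ * M)⁻¹ * Mᵀ := by
        simp only [colProj, Matrix.mul_assoc]
    _ = colProj M := by rw [colProj_mul hG, colProj]

theorem transpose_colProj (M : Matrix m n R) : (colProj M)ᵀ = colProj M := by
  simp [colProj, transpose_mul, transpose_nonsing_inv, Matrix.mul_assoc]

theorem mul_one_sub_colProj_mul_transpose [DecidableEq m] {l : Type*} [Fintype l]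
    (Q : Matrix l m R) (A : Matrix l n R) :
    Q * (1 - colProj (Qᵀ * A)) * Qᵀ =
      Q * Qᵀ - Q * Qᵀ * A * (Aᵀ * (Q * Qᵀ) * A)⁻¹ * (Aᵀ * (Q * Qᵀ)) := by
  simp only [colProj, transpose_mul, transpose_transpose, Matrix.mul_sub, Matrix.sub_mul,
    Matrix.mul_one, Matrix.mul_assoc]

theorem dotProduct_mul_mul_transpose_mulVec {l : Type*} [Fintype l] (Q : Matrix l m R)
    (S : Matrix m m R) (a : l → R) : a ⬝ᵥ (Q * S * Qᵀ) *ᵥ a = (Qᵀ *ᵥ a) ⬝ᵥ S *ᵥ (Qᵀ *ᵥ a) := by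
  rw [← mulVec_mulVec, ← mulVec_mulVec, dotProduct_mulVec, ← mulVec_transpose]

end CommRing

variable {K : Type*} [Field K] [LinearOrder K] [IsStrictOrderedRing K] {M : Matrix m n K}

theorem dotProduct_one_sub_colProj_mulVec_eq_zero_iff [DecidableEq m]
    (hG : IsUnit (Mᵀ * M).det) (v : m → K) :
    v ⬝ᵥ (1 - colProj M) *ᵥ v = 0 ↔ v ∈ Submodule.span K (Set.range M.col) := by
  have hsymm : (1 - colProj M)ᵀ = 1 - colProj M := by
    rw [transpose_sub, transpose_one, transpose_colProj]
  have hres : v ⬝ᵥ (1 - colProj M) *ᵥ v = (1 - colProj M) *ᵥ v ⬝ᵥ (1 - colProj M) *ᵥ v :=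
    calc v ⬝ᵥ (1 - colProj M) *ᵥ v = v ⬝ᵥ ((1 - colProj M)ᵀ * (1 - colProj M)) *ᵥ v := by
          rw [hsymm, (isIdempotentElem_colProj hG).one_sub.eq]
      _ = _ := by rw [← mulVec_mulVec, dotProduct_mulVec, vecMul_transpose]
  rw [hres, dotProduct_self_eq_zero, sub_mulVec, one_mulVec, sub_eq_zero, ← range_mulVecLin]
  constructor
  · intro hv
    exact ⟨((Mᵀ * M)⁻¹ * Mᵀ) *ᵥ v, by
      rw [mulVecLin_apply, mulVec_mulVec, ← Matrix.mul_assoc, ← colProj, ← hv]⟩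
  · rintro ⟨u, rfl⟩
    rw [mulVecLin_apply, mulVec_mulVec, colProj_mul hG]

end ColProj

end Matrix

theorem stmt7_general {m n r k : ℕ}
    (A : Matrix (Fin m) (Fin n) ℝ)
    (Q : Matrix (Fin m) (Fin (m - r)) ℝ)
    (I : Finset (Fin n)) (hIcard : I.card = k - r)
    (AI : Matrix (Fin m) {i // i ∈ I} ℝ) (hAI : AI = Matrix.of (fun x i => A x i.1))
    (hrankAI : (Qᵀ * AI).rank = k - r) :
    ∀ j : Fin n, j ∉ I →
      ((Qᵀ * Matrix.of (fun x c =>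
          Sum.elim (fun i : {i // i ∈ I} => A x i.1) (fun _ : Unit => A x j) c)).rank = k - r
        ↔ (fun i => A i j) ⬝ᵥ
            ((Q * Qᵀ -
              (Q * Qᵀ * AI) * (AIᵀ * (Q * Qᵀ) * AI)⁻¹ * (AIᵀ * (Q * Qᵀ))).mulVec
              (fun i => A i j)) = 0) := by
  intro j _
  have hcols : Matrix.of (fun x c =>
      Sum.elim (fun i : {i // i ∈ I} => A x i.1) (fun _ : Unit => A x j) c) =
        fromCols AI (replicateCol Unit fun i => A i j) := by
    rw [hAI]; rfl
  have hgram : IsUnit ((Qᵀ * AI)ᵀ * (Qᵀ * AI)).det :=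
    (isUnit_iff_isUnit_det _).mp <| isUnit_of_rank_eq_card _ <| by
      rw [rank_transpose_mul_self, hrankAI, Fintype.card_coe, hIcard]
  rw [hcols, mul_fromCols, ← replicateCol_mulVec, ← hrankAI,
    rank_fromCols_replicateCol_eq_rank_iff, ← mul_one_sub_colProj_mul_transpose,
    dotProduct_mul_mul_transpose_mulVec, dotProduct_one_sub_colProj_mulVec_eq_zero_iff hgram]

/-- The rank form of the generalized MUSIC criterion is equivalent to the
projection (quadratic-form) form. -/
theorem stmt7 {m n r k : ℕ} (hrm : r ≤ m) (hmn : m < n) (hrk : r ≤ k)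
    (A : Matrix (Fin m) (Fin n) ℝ) (X : Matrix (Fin n) (Fin r) ℝ)
    (B : Matrix (Fin m) (Fin r) ℝ) (hB : B = A * X)
    (hk : (rowSupp X).card = k) (hrank : B.rank = r)
    (hgenrows : ∀ Z : Finset (Fin n), Z ⊆ rowSupp X → Z.card = r →
      LinearIndependent ℝ (fun i : {i // i ∈ Z} => X i.1))
    (hA : ∀ S : Finset (Fin n), S.card = 2 * k - r + 1 →
      LinearIndependent ℝ (fun j : {j // j ∈ S} => (fun i => A i j.1)))
    (Q : Matrix (Fin m) (Fin (m - r)) ℝ) (hQ : Qᵀ * Q = 1) (hQB : Qᵀ * B = 0)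
    (I : Finset (Fin n)) (hI : I ⊆ rowSupp X) (hIcard : I.card = k - r)
    (AI : Matrix (Fin m) {i // i ∈ I} ℝ) (hAI : AI = Matrix.of (fun x i => A x i.1))
    (hrankAI : (Qᵀ * AI).rank = k - r) :
    ∀ j : Fin n, j ∉ I →
      ((Qᵀ * Matrix.of (fun x c =>
          Sum.elim (fun i : {i // i ∈ I} => A x i.1) (fun _ : Unit => A x j) c)).rank = k - r
        ↔ (fun i => A i j) ⬝ᵥ
            ((Q * Qᵀ -
              (Q * Qᵀ * AI) * (AIᵀ * (Q * Qᵀ) * AI)⁻¹ * (AIᵀ * (Q * Qᵀ))).mulVec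
              (fun i => A i j)) = 0) :=
  stmt7_general A Q I hIcard AI hAI hrankAI
end

section
/- Let B ∈ ℝ^{m×r} have full column rank r with smallest singular value σ_min(B), and let N ∈ ℝ^{m×r} with spectral norm ‖N‖ < σ_min(B). Set Y = B + N. Then Y has full column rank and the orthogonal projections onto the column spaces satisfy ‖P_{R(Y)} − P_{R(B)}‖ ≤ ‖N‖ · 2(σ_max(B) + σ_min(B)) / (σ_min(B)·(σ_min(B) − ‖N‖)). -/
open Matrix

/-- Spectral (L2 operator) norm of a matrix. -/
noncomputable def specNorm {m n : ℕ} (M : Matrix (Fin m) (Fin n) ℝ) : ℝ :=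
  sSup {c | ∃ x : EuclideanSpace ℝ (Fin n), ‖x‖ = 1 ∧ ‖Matrix.toEuclideanLin M x‖ = c}

/-- Smallest singular value of a matrix. -/
noncomputable def sigmaMin {m n : ℕ} (M : Matrix (Fin m) (Fin n) ℝ) : ℝ :=
  sInf {c | ∃ x : EuclideanSpace ℝ (Fin n), ‖x‖ = 1 ∧ ‖Matrix.toEuclideanLin M x‖ = c}

/-- Largest singular value of a matrix. -/
noncomputable def sigmaMax {m n : ℕ} (M : Matrix (Fin m) (Fin n) ℝ) : ℝ :=
  specNorm M

/-- Orthogonal projection onto the column space of a full-column-rank matrix. -/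
noncomputable def proj {m n : ℕ} (M : Matrix (Fin m) (Fin n) ℝ) : Matrix (Fin m) (Fin m) ℝ :=
  M * (Mᵀ * M)⁻¹ * Mᵀ

/-!
Write `M⁺ = (MᵀM)⁻¹Mᵀ`, so that `P_M = M M⁺`, and note `‖M⁺‖ ≤ 1/c` whenever `‖Mx‖ ≥ c‖x‖`
for all `x`, since `c‖M⁺y‖ ≤ ‖P_M y‖ ≤ ‖y‖`. With `Y = B + N`, `Y` is bounded below by
`σ_min(B) - ‖N‖`, hence has full column rank. Split
`P_Y - P_B = P_Y (1 - P_B) - (1 - P_Y) P_B`; because `1 - P_B` kills `B`,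
`(1 - P_B) P_Y = (1 - P_B) N Y⁺`, and symmetrically `(1 - P_Y) P_B = -(1 - P_Y) N B⁺`.
The two terms are therefore at most `‖N‖ / (σ_min(B) - ‖N‖)` and `‖N‖ / σ_min(B)`.
-/

open scoped Matrix.Norms.L2Operator

section TransposeMulSelf

variable {R ι κ : Type*} [Field R] [LinearOrder R] [IsStrictOrderedRing R]
  [Fintype ι] [Fintype κ] [DecidableEq κ] {A : Matrix ι κ R}

theorem isUnit_transpose_mul_self_of_injective_mulVec (hA : Function.Injective A.mulVec) :
    IsUnit (Aᵀ * A) := by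
  have hker : LinearMap.ker (Aᵀ * A).mulVecLin = ⊥ := by
    rw [ker_mulVecLin_transpose_mul_self]
    exact LinearMap.ker_eq_bot.2 hA
  exact mulVec_injective_iff_isUnit.1 (LinearMap.ker_eq_bot.1 hker)

theorem rank_eq_card_of_injective_mulVec (hA : Function.Injective A.mulVec) :
    A.rank = Fintype.card κ := by
  rw [← rank_transpose_mul_self,
    rank_of_isUnit _ (isUnit_transpose_mul_self_of_injective_mulVec hA)]

end TransposeMulSelf

variable {m n : ℕ}

theorem norm_toEuclideanLin_le (M : Matrix (Fin m) (Fin n) ℝ) (x : EuclideanSpace ℝ (Fin n)) :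
    ‖toEuclideanLin M x‖ ≤ ‖M‖ * ‖x‖ :=
  l2_opNorm_mulVec M x

theorem specNorm_eq_norm (M : Matrix (Fin m) (Fin n) ℝ) : specNorm M = ‖M‖ := by
  rw [specNorm, l2_opNorm_def, ← ContinuousLinearMap.sSup_sphere_eq_norm]
  congr 1
  ext c
  simp

def IsBoundedBelowBy (M : Matrix (Fin m) (Fin n) ℝ) (c : ℝ) : Prop :=
  ∀ x : EuclideanSpace ℝ (Fin n), c * ‖x‖ ≤ ‖toEuclideanLin M x‖

theorem isBoundedBelowBy_sigmaMin (M : Matrix (Fin m) (Fin n) ℝ) :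
    IsBoundedBelowBy M (sigmaMin M) := by
  intro x
  rcases eq_or_ne x 0 with rfl | hx
  · simp
  have hx' : ‖x‖ ≠ 0 := norm_ne_zero_iff.2 hx
  have hunit : sigmaMin M ≤ ‖toEuclideanLin M (‖x‖⁻¹ • x)‖ :=
    csInf_le ⟨0, by rintro c ⟨z, -, rfl⟩; positivity⟩ ⟨‖x‖⁻¹ • x, by simp [norm_smul, hx'], rfl⟩
  rw [map_smul, norm_smul, norm_inv, norm_norm, inv_mul_eq_div, le_div_iff₀ (by positivity)] at hunit
  exact hunit

theorem IsBoundedBelowBy.add {B : Matrix (Fin m) (Fin n) ℝ} {c : ℝ} (hB : IsBoundedBelowBy B c)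
    (N : Matrix (Fin m) (Fin n) ℝ) : IsBoundedBelowBy (B + N) (c - ‖N‖) := fun x => by
  have h : ‖toEuclideanLin B x‖ ≤ ‖toEuclideanLin (B + N) x‖ + ‖toEuclideanLin N x‖ := by
    simpa using norm_sub_le (toEuclideanLin (B + N) x) (toEuclideanLin N x)
  nlinarith [hB x, norm_toEuclideanLin_le N x]

theorem IsBoundedBelowBy.injective_mulVec {M : Matrix (Fin m) (Fin n) ℝ} {c : ℝ}
    (hM : IsBoundedBelowBy M c) (hc : 0 < c) : Function.Injective M.mulVec := by
  refine (injective_iff_map_eq_zero M.mulVecLin).2 fun v hv => ?_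
  have h := hM (WithLp.toLp 2 v)
  rw [toLpLin_toLp, toLin'_apply, ← mulVecLin_apply, hv, WithLp.toLp_zero, norm_zero] at h
  have hv0 : ‖WithLp.toLp 2 v‖ = 0 := by nlinarith [norm_nonneg (WithLp.toLp 2 v)]
  simpa using hv0

theorem IsBoundedBelowBy.isUnit_transpose_mul_self {M : Matrix (Fin m) (Fin n) ℝ} {c : ℝ}
    (hM : IsBoundedBelowBy M c) (hc : 0 < c) : IsUnit (Mᵀ * M) :=
  isUnit_transpose_mul_self_of_injective_mulVec (hM.injective_mulVec hc)

noncomputable def pinv (M : Matrix (Fin m) (Fin n) ℝ) : Matrix (Fin n) (Fin m) ℝ :=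
  (Mᵀ * M)⁻¹ * Mᵀ

theorem proj_eq_mul_pinv (M : Matrix (Fin m) (Fin n) ℝ) : proj M = M * pinv M :=
  Matrix.mul_assoc _ _ _

theorem proj_mul_self {M : Matrix (Fin m) (Fin n) ℝ} (hM : IsUnit (Mᵀ * M)) : proj M * M = M := by
  rw [proj, Matrix.mul_assoc, Matrix.mul_assoc, nonsing_inv_mul _ ((isUnit_iff_isUnit_det _).1 hM),
    Matrix.mul_one]

theorem conjTranspose_proj (M : Matrix (Fin m) (Fin n) ℝ) : (proj M)ᴴ = proj M := by
  rw [conjTranspose_eq_transpose_of_trivial, proj, transpose_mul, transpose_mul,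
    transpose_nonsing_inv, transpose_mul, transpose_transpose, Matrix.mul_assoc]

theorem isStarProjection_proj {M : Matrix (Fin m) (Fin n) ℝ} (hM : IsUnit (Mᵀ * M)) :
    IsStarProjection (proj M) where
  isIdempotentElem := by
    rw [IsIdempotentElem, proj_eq_mul_pinv, ← Matrix.mul_assoc, ← proj_eq_mul_pinv, proj_mul_self hM,
      proj_eq_mul_pinv]
  isSelfAdjoint := conjTranspose_proj M

theorem norm_pinv_le {M : Matrix (Fin m) (Fin n) ℝ} {c : ℝ} (hM : IsBoundedBelowBy M c)
    (hc : 0 < c) : ‖pinv M‖ ≤ c⁻¹ := by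
  rw [l2_opNorm_def]
  refine ContinuousLinearMap.opNorm_le_bound _ (inv_nonneg.2 hc.le) fun y => ?_
  change ‖toEuclideanLin (pinv M) y‖ ≤ c⁻¹ * ‖y‖
  rw [le_inv_mul_iff₀ hc]
  calc c * ‖toEuclideanLin (pinv M) y‖ ≤ ‖toEuclideanLin M (toEuclideanLin (pinv M) y)‖ := hM _
    _ = ‖toEuclideanLin (proj M) y‖ := by
      simp [proj_eq_mul_pinv]
    _ ≤ ‖proj M‖ * ‖y‖ := norm_toEuclideanLin_le _ _
    _ ≤ ‖y‖ := mul_le_of_le_one_left (norm_nonneg _)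
      (isStarProjection_proj (hM.isUnit_transpose_mul_self hc)).norm_le

theorem one_sub_proj_mul_proj {B : Matrix (Fin m) (Fin n) ℝ} (hB : IsUnit (Bᵀ * B))
    (Y : Matrix (Fin m) (Fin n) ℝ) : (1 - proj B) * proj Y = (1 - proj B) * (Y - B) * pinv Y := by
  have hBB : (1 - proj B) * B = 0 := by
    rw [Matrix.sub_mul, Matrix.one_mul, proj_mul_self hB, sub_self]
  rw [Matrix.mul_sub, hBB, sub_zero, Matrix.mul_assoc, ← proj_eq_mul_pinv]

theorem norm_one_sub_proj_mul_proj_le {B Y : Matrix (Fin m) (Fin n) ℝ} {c : ℝ}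
    (hB : IsUnit (Bᵀ * B)) (hY : IsBoundedBelowBy Y c) (hc : 0 < c) :
    ‖(1 - proj B) * proj Y‖ ≤ ‖Y - B‖ / c :=
  calc ‖(1 - proj B) * proj Y‖ = ‖(1 - proj B) * (Y - B) * pinv Y‖ := by
        rw [one_sub_proj_mul_proj hB]
    _ ≤ ‖1 - proj B‖ * ‖Y - B‖ * ‖pinv Y‖ :=
        (l2_opNorm_mul _ _).trans (mul_le_mul_of_nonneg_right (l2_opNorm_mul _ _) (norm_nonneg _))
    _ ≤ 1 * ‖Y - B‖ * c⁻¹ := by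
        gcongr
        · exact (isStarProjection_proj hB).one_sub.norm_le
        · exact norm_pinv_le hY hc
    _ = ‖Y - B‖ / c := by ring

theorem norm_proj_sub_proj_le {k : ℕ} (B : Matrix (Fin m) (Fin n) ℝ)
    (Y : Matrix (Fin m) (Fin k) ℝ) :
    ‖proj Y - proj B‖ ≤ ‖(1 - proj B) * proj Y‖ + ‖(1 - proj Y) * proj B‖ := by
  have hsplit : proj Y - proj B = ((1 - proj B) * proj Y)ᴴ - (1 - proj Y) * proj B := by
    rw [conjTranspose_mul, conjTranspose_sub, conjTranspose_one, conjTranspose_proj,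
      conjTranspose_proj]
    noncomm_ring
  rw [hsplit, ← l2_opNorm_conjTranspose ((1 - proj B) * proj Y)]
  exact norm_sub_le _ _

theorem norm_proj_add_sub_proj_le {B N : Matrix (Fin m) (Fin n) ℝ} {σ : ℝ}
    (hB : IsBoundedBelowBy B σ) (hN : ‖N‖ < σ) :
    ‖proj (B + N) - proj B‖ ≤ ‖N‖ / (σ - ‖N‖) + ‖N‖ / σ := by
  have hσ : 0 < σ := (norm_nonneg N).trans_lt hN
  have hgap : 0 < σ - ‖N‖ := sub_pos.2 hN
  have hY := hB.add N
  refine (norm_proj_sub_proj_le B (B + N)).trans (add_le_add ?_ ?_)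
  · simpa using norm_one_sub_proj_mul_proj_le (hB.isUnit_transpose_mul_self hσ) hY hgap
  · simpa using norm_one_sub_proj_mul_proj_le (hY.isUnit_transpose_mul_self hgap) hB hσ

theorem stmt10_general {m r : ℕ} (B N : Matrix (Fin m) (Fin r) ℝ)
    (hN : specNorm N < sigmaMin B) :
    (B + N).rank = r ∧
      specNorm (proj (B + N) - proj B) ≤
        specNorm N * (2 * (sigmaMax B + sigmaMin B)) /
          (sigmaMin B * (sigmaMin B - specNorm N)) := by
  simp only [sigmaMax, specNorm_eq_norm] at hN ⊢
  have hB := isBoundedBelowBy_sigmaMin B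
  have hσ : 0 < sigmaMin B := (norm_nonneg N).trans_lt hN
  have hgap : 0 < sigmaMin B - ‖N‖ := sub_pos.2 hN
  refine ⟨?_, (norm_proj_add_sub_proj_le hB hN).trans ?_⟩
  · simpa using rank_eq_card_of_injective_mulVec ((hB.add N).injective_mulVec hgap)
  · rw [div_add_div _ _ hgap.ne' hσ.ne', mul_comm (sigmaMin B - ‖N‖) (sigmaMin B),
      div_le_div_iff_of_pos_right (by positivity)]
    nlinarith [mul_nonneg (norm_nonneg N) (norm_nonneg B), mul_self_nonneg ‖N‖]

theorem stmt10 {m r : ℕ} (B N : Matrix (Fin m) (Fin r) ℝ)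
    (hB : B.rank = r) (hN : specNorm N < sigmaMin B) :
    (B + N).rank = r ∧
      specNorm (proj (B + N) - proj B) ≤
        specNorm N * (2 * (sigmaMax B + sigmaMin B)) /
          (sigmaMin B * (sigmaMin B - specNorm N)) :=
  stmt10_general B N hN
end

section
/- Let r ≤ k < m be positive integers and A ∈ ℝ^{m×k} with singular values σ₁(A) ≥ ⋯ ≥ σ_k(A) ≥ 0. Then for any r-dimensional subspace W of the column space R(A), the Frobenius norm satisfies ‖Aᵀ·P_W‖_F² ≥ σ_{k-r+1}(A)² + σ_{k-r+2}(A)² + ⋯ + σ_k(A)², where P_W is the orthogonal projection onto W. -/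
/-!
Put `Q = Uᵀ P U`. Then `‖Aᵀ P‖_F² = tr (Aᵀ P A) = ∑ σ_j² Q_jj`. Since `P` is an orthogonal
projection, `Q_jj = ‖P u_j‖²` lies in `[0, 1]`, and since `range P ⊆ range A ⊆ range U`,
`tr Q = tr P = dim W = r`. A combination of the decreasing numbers `σ_j²` with weights in
`[0, 1]` of total mass `r` is at least the sum of the `r` smallest of them.
-/

open Matrix Finset

theorem sum_le_sum_mul_of_le_of_ge {ι : Type*} [Fintype ι] {s : Finset ι} {a q : ι → ℝ}
    (c : ℝ) (has : ∀ i ∈ s, a i ≤ c) (hac : ∀ i ∉ s, c ≤ a i)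
    (hq0 : ∀ i, 0 ≤ q i) (hq1 : ∀ i, q i ≤ 1) (hq : ∑ i, q i = #s) :
    ∑ i ∈ s, a i ≤ ∑ i, a i * q i := by
  classical
  -- every term is a product of two factors of the same sign
  have hnonneg : 0 ≤ ∑ i, (a i - c) * (q i - if i ∈ s then 1 else 0) := by
    refine sum_nonneg fun i _ => ?_
    split_ifs with hi
    · exact mul_nonneg_of_nonpos_of_nonpos (by linarith [has i hi]) (by linarith [hq1 i])
    · exact mul_nonneg (by linarith [hac i hi]) (by linarith [hq0 i])
  have hexpand : ∑ i, (a i - c) * (q i - if i ∈ s then 1 else 0)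
      = ∑ i, a i * q i - ∑ i ∈ s, a i - c * (∑ i, q i - #s) := by
    simp only [mul_sub, sub_mul, sum_sub_distrib, mul_ite, mul_one, mul_zero, ← mul_sum,
      sum_ite_mem, univ_inter, sum_const, nsmul_eq_mul]
    ring
  rw [hexpand, hq] at hnonneg
  linarith

theorem sum_ite_le_sum_mul_of_antitone {k r : ℕ} (hr : 0 < r) (hrk : r ≤ k) {a q : Fin k → ℝ}
    (ha : Antitone a) (hq0 : ∀ j, 0 ≤ q j) (hq1 : ∀ j, q j ≤ 1) (hq : ∑ j, q j = r) :
    (∑ j : Fin k, if k - r ≤ (j : ℕ) then a j else 0) ≤ ∑ j, a j * q j := by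
  set t : Fin k := ⟨k - r, by omega⟩
  have hIci : univ.filter (fun j : Fin k => k - r ≤ (j : ℕ)) = Ici t := by
    ext j; simp [t, Fin.le_def]
  rw [← sum_filter, hIci]
  refine sum_le_sum_mul_of_le_of_ge (a t) (fun j hj => ha (mem_Ici.1 hj))
    (fun j hj => ha (le_of_lt (by simpa using hj))) hq0 hq1 ?_
  rw [hq, Fin.card_Ici]
  norm_cast
  show r = k - (k - r)
  omega

theorem sum_sq_eq_trace_mul_transpose {R m n : Type*} [CommSemiring R] [Fintype m] [Fintype n]
    (M : Matrix m n R) : ∑ i, ∑ j, M i j ^ 2 = (M * Mᵀ).trace := by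
  simp [trace, mul_apply, sq]

theorem trace_diagonal_mul_mul_diagonal {R n : Type*} [CommSemiring R] [Fintype n]
    [DecidableEq n] (d : n → R) (M : Matrix n n R) :
    (diagonal d * M * diagonal d).trace = ∑ j, d j ^ 2 * M j j := by
  simp only [trace, Matrix.diag, mul_diagonal, diagonal_mul]
  exact sum_congr rfl fun j _ => by ring

theorem trace_transpose_mul_mul_of_eq_mul_diagonal_mul {R m n : Type*} [CommSemiring R]
    [Fintype m] [Fintype n] [DecidableEq n] {A U : Matrix m n R} {V : Matrix n n R} {σ : n → R}
    (hV : Vᵀ * V = 1) (hA : A = U * diagonal σ * Vᵀ) (M : Matrix m m R) :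
    (Aᵀ * M * A).trace = ∑ j, σ j ^ 2 * (Uᵀ * M * U) j j := by
  have hAt : Aᵀ = V * diagonal σ * Uᵀ := by
    rw [hA, transpose_mul, transpose_mul, transpose_transpose, diagonal_transpose,
      Matrix.mul_assoc]
  calc (Aᵀ * M * A).trace = (V * (diagonal σ * (Uᵀ * M * U) * diagonal σ) * Vᵀ).trace := by
        rw [hAt, hA]; simp only [Matrix.mul_assoc]
    _ = (diagonal σ * (Uᵀ * M * U) * diagonal σ).trace := by
        rw [trace_mul_cycle, hV, Matrix.one_mul]
    _ = ∑ j, σ j ^ 2 * (Uᵀ * M * U) j j := trace_diagonal_mul_mul_diagonal _ _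

theorem diag_transpose_mul_mul_nonneg {m n : Type*} [Fintype m] [Fintype n] {P : Matrix m m ℝ}
    (hPsym : P.IsSymm) (hPidem : P * P = P) (B : Matrix m n ℝ) (j : n) :
    0 ≤ (Bᵀ * P * B) j j := by
  have hPSD : (Bᵀ * P * B).PosSemidef := by
    have := posSemidef_conjTranspose_mul_self (P * B)
    rwa [conjTranspose_eq_transpose_of_trivial, transpose_mul, hPsym.eq, Matrix.mul_assoc,
      ← Matrix.mul_assoc P, hPidem, ← Matrix.mul_assoc] at this
  exact hPSD.diag_nonneg

theorem diag_transpose_mul_mul_le {m n : Type*} [Fintype m] [DecidableEq m] [Fintype n]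
    {P : Matrix m m ℝ} (hPsym : P.IsSymm) (hPidem : P * P = P) (B : Matrix m n ℝ) (j : n) :
    (Bᵀ * P * B) j j ≤ (Bᵀ * B) j j := by
  have hsym : (1 - P).IsSymm := isSymm_one.sub hPsym
  have hidem : (1 - P) * (1 - P) = 1 - P := by
    simp only [sub_mul, mul_sub, one_mul, mul_one, hPidem, sub_self, sub_zero]
  have := diag_transpose_mul_mul_nonneg hsym hidem B j
  rw [Matrix.mul_sub, Matrix.sub_mul, Matrix.mul_one, Matrix.sub_apply] at this
  linarith

theorem trace_eq_finrank_range_toLpLin {K n : Type*} [Field K] [Fintype n] [DecidableEq n]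
    (p : ENNReal) {P : Matrix n n K} (hP : P * P = P) :
    P.trace = Module.finrank K (LinearMap.range (toLpLin p p P)) := by
  have hidem : IsIdempotentElem (toLpLin p p P) := by
    rw [IsIdempotentElem, Module.End.mul_eq_comp, ← toLpLin_mul_same, hP]
  rw [← (LinearMap.IsIdempotentElem.isProj_range _ hidem).trace, toLpLin_eq_toLin,
    trace_toLin_eq]

theorem mul_eq_of_mul_eq_of_range_le {R m n o : Type*} [CommRing R] [Fintype m] [DecidableEq m]
    [Fintype n] [DecidableEq n] [Fintype o] [DecidableEq o] {p q : ENNReal}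
    {M : Matrix m m R} {A : Matrix m n R} {B : Matrix m o R} (hMA : M * A = A)
    (hBA : LinearMap.range (toLpLin p q B) ≤ LinearMap.range (toLpLin p q A)) :
    M * B = B := by
  refine (toLpLin p q).injective (LinearMap.ext fun x => ?_)
  obtain ⟨y, hy⟩ := hBA (LinearMap.mem_range_self _ x)
  rw [toLpLin_mul p q q, LinearMap.comp_apply, ← hy, ← LinearMap.comp_apply, ← toLpLin_mul, hMA]

theorem stmt12_general {m k r : ℕ} (hr : 0 < r) (hrk : r ≤ k)
    (A : Matrix (Fin m) (Fin k) ℝ)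
    (σ : Fin k → ℝ) (hσnonneg : ∀ j, 0 ≤ σ j) (hσmono : Antitone σ)
    (U : Matrix (Fin m) (Fin k) ℝ) (V : Matrix (Fin k) (Fin k) ℝ)
    (hU : Uᵀ * U = 1) (hV : Vᵀ * V = 1)
    (hsvd : A = U * Matrix.diagonal σ * Vᵀ)
    (W : Submodule ℝ (EuclideanSpace ℝ (Fin m)))
    (hWA : W ≤ LinearMap.range (Matrix.toEuclideanLin A))
    (hWdim : Module.finrank ℝ W = r)
    (P : Matrix (Fin m) (Fin m) ℝ) (hPsym : P.IsSymm) (hPidem : P * P = P)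
    (hPrange : LinearMap.range (Matrix.toEuclideanLin P) = W) :
    (∑ j : Fin k, if k - r ≤ (j : ℕ) then σ j ^ 2 else 0) ≤
      ∑ i, ∑ j, ((Aᵀ * P) i j) ^ 2 := by
  have hUUA : U * Uᵀ * A = A := by
    rw [hsvd, Matrix.mul_assoc U Uᵀ, ← Matrix.mul_assoc Uᵀ, ← Matrix.mul_assoc Uᵀ, hU,
      Matrix.one_mul, ← Matrix.mul_assoc]
  have hUUP : U * Uᵀ * P = P := mul_eq_of_mul_eq_of_range_le hUUA (hPrange ▸ hWA)
  have htrace : ∑ j, (Uᵀ * P * U) j j = r := by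
    change (Uᵀ * P * U).trace = r
    rw [trace_mul_cycle, hUUP, trace_eq_finrank_range_toLpLin 2 hPidem, hPrange, hWdim]
  have hnorm : ∑ i, ∑ j, (Aᵀ * P) i j ^ 2 = ∑ j, σ j ^ 2 * (Uᵀ * P * U) j j := by
    rw [sum_sq_eq_trace_mul_transpose, transpose_mul, hPsym.eq, transpose_transpose,
      ← Matrix.mul_assoc, Matrix.mul_assoc Aᵀ P P, hPidem,
      trace_transpose_mul_mul_of_eq_mul_diagonal_mul hV hsvd]
  rw [hnorm]
  refine sum_ite_le_sum_mul_of_antitone hr hrk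
    (fun i j hij => pow_le_pow_left₀ (hσnonneg j) (hσmono hij) 2)
    (diag_transpose_mul_mul_nonneg hPsym hPidem U) (fun j => ?_) htrace
  simpa [hU] using diag_transpose_mul_mul_le hPsym hPidem U j

theorem stmt12 {m k r : ℕ} (hr : 0 < r) (hrk : r ≤ k) (hkm : k < m)
    (A : Matrix (Fin m) (Fin k) ℝ)
    (σ : Fin k → ℝ) (hσnonneg : ∀ j, 0 ≤ σ j) (hσmono : Antitone σ)
    (U : Matrix (Fin m) (Fin k) ℝ) (V : Matrix (Fin k) (Fin k) ℝ)
    (hU : Uᵀ * U = 1) (hV : Vᵀ * V = 1)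
    (hsvd : A = U * Matrix.diagonal σ * Vᵀ)
    (W : Submodule ℝ (EuclideanSpace ℝ (Fin m)))
    (hWA : W ≤ LinearMap.range (Matrix.toEuclideanLin A))
    (hWdim : Module.finrank ℝ W = r)
    (P : Matrix (Fin m) (Fin m) ℝ) (hPsym : P.IsSymm) (hPidem : P * P = P)
    (hPrange : LinearMap.range (Matrix.toEuclideanLin P) = W) :
    (∑ j : Fin k, if k - r ≤ (j : ℕ) then σ j ^ 2 else 0) ≤
      ∑ i, ∑ j, ((Aᵀ * P) i j) ^ 2 :=
  stmt12_general hr hrk A σ hσnonneg hσmono U V hU hV hsvd W hWA hWdim P hPsym hPidem hPrange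
end

section
/- Let X ∈ ℝ^{n×r} have exactly k nonzero rows which are in general position (any r of them are linearly independent), with r ≤ k. Then every nonzero vector x in the column space R(X) satisfies ‖x‖₀ ≥ k − r + 1. -/
open Matrix

/-- Support (set of nonzero coordinates) of a vector. -/
noncomputable def vecSupp {n : ℕ} (x : Fin n → ℝ) : Finset (Fin n) :=
  @Finset.filter _ (fun i => x i ≠ 0) (Classical.decPred _) Finset.univ

/-!
Outside the support of `x = X c` lie the nonzero rows `X i` with `X i ⬝ᵥ c = 0`. If there were
`r` of them, general position would make them a basis of `ℝ^r`, forcing `c = 0`. Hence at most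
`r - 1` of the `k` nonzero rows are missing from the support of `x`.
-/

theorem Matrix.eq_zero_of_linearIndependent_of_dotProduct_eq_zero {K ι m : Type*} [Field K]
    [Fintype ι] [Fintype m] {v : ι → m → K} (hv : LinearIndependent K v)
    (hcard : Fintype.card ι = Fintype.card m) {c : m → K} (hvc : ∀ i, v i ⬝ᵥ c = 0) :
    c = 0 := by
  have hspan : Submodule.span K (Set.range v) = ⊤ :=
    hv.span_eq_top_of_card_eq_finrank' (by rw [hcard, Module.finrank_fintype_fun_eq_card])
  have hφ : dotProductBilin K K c = 0 :=
    LinearMap.ext_on_range hspan fun i => by simp [dotProduct_comm c, hvc]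
  exact dotProduct_eq_zero c fun w => LinearMap.congr_fun hφ w

theorem vecSupp_mulVec_subset_rowSupp {n r : ℕ} (X : Matrix (Fin n) (Fin r) ℝ)
    (c : Fin r → ℝ) : vecSupp (X *ᵥ c) ⊆ rowSupp X := by
  intro i hi
  simp only [vecSupp, rowSupp, Finset.mem_filter, Finset.mem_univ, true_and] at hi ⊢
  intro hXi
  exact hi (by simp [mulVec, hXi])

theorem card_rowSupp_sdiff_vecSupp_mulVec_lt {n r : ℕ} (X : Matrix (Fin n) (Fin r) ℝ)
    (hgenrows : ∀ Z : Finset (Fin n), Z ⊆ rowSupp X → Z.card = r →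
      LinearIndependent ℝ (fun i : {i // i ∈ Z} => X i.1))
    {c : Fin r → ℝ} (hc : X *ᵥ c ≠ 0) :
    (rowSupp X \ vecSupp (X *ᵥ c)).card < r := by
  by_contra! hle
  obtain ⟨Z, hZ, hZcard⟩ := Finset.exists_subset_card_eq hle
  have hZero : ∀ i : {i // i ∈ Z}, X i.1 ⬝ᵥ c = 0 := fun i => by
    have hi := (Finset.mem_sdiff.mp (hZ i.2)).2
    simp only [vecSupp, Finset.mem_filter, Finset.mem_univ, true_and, not_not] at hi
    exact hi
  have hc0 : c = 0 := eq_zero_of_linearIndependent_of_dotProduct_eq_zero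
    (hgenrows Z (hZ.trans Finset.sdiff_subset) hZcard) (by simp [hZcard]) hZero
  exact hc (by simp [hc0])

theorem stmt14 {n r k : ℕ} (hrk : r ≤ k)
    (X : Matrix (Fin n) (Fin r) ℝ) (hk : (rowSupp X).card = k)
    (hgenrows : ∀ Z : Finset (Fin n), Z ⊆ rowSupp X → Z.card = r →
      LinearIndependent ℝ (fun i : {i // i ∈ Z} => X i.1)) :
    ∀ c : Fin r → ℝ, X.mulVec c ≠ 0 → k - r + 1 ≤ (vecSupp (X.mulVec c)).card := by
  intro c hc
  have hsub := vecSupp_mulVec_subset_rowSupp X c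
  have hlt := card_rowSupp_sdiff_vecSupp_mulVec_lt X hgenrows hc
  rw [Finset.card_sdiff_of_subset hsub] at hlt
  have hle := Finset.card_le_card hsub
  omega
end
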